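/- arXiv:1709.08597 — 4 statements merged into one kernel-verified Lean document; each statement's English description precedes it below -/
import Mathlib

section
/- Frequency-counting formula for the truncated anchored-ANOVA expansion: for every truncation level ℓ with 0 ≤ ℓ ≤ M and every ξ ∈ Γ, Σ_{K ⊆ {1,…,M}, |K| ≤ ℓ} u_K(ξ) = Σ_{S ⊆ {1,…,M}, |S| ≤ ℓ} ϰ_{M,|S|,ℓ} · (P_S u)(ξ), where the integer coefficient is ϰ_{M,j,ℓ} = Σ_{r=j}^{ℓ} (−1)^{r−j} · (M−j)! / ((r−j)! (M−r)!) = Σ_{r=j}^{ℓ} (−1)^{r−j} · C(M−j, r−j), and the scalar multiplication is the ℤ-action on the additive group V. -/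
open Finset in
lemma count_supersets_aux {M : ℕ} (S : Finset (Fin M)) (r : ℕ) (hr : S.card ≤ r) :
    ((Finset.univ : Finset (Fin M)).powerset.filter
        (fun K => (K.card ≤ r ∨ True) ∧ S ⊆ K ∧ K.card = r)).card
      = (M - S.card).choose (r - S.card) := by
  classical
  have hcompl : Sᶜ.card = M - S.card := by
    rw [Finset.card_compl, Fintype.card_fin]
  rw [← hcompl, ← Finset.card_powersetCard (r - S.card) Sᶜ]
  apply Finset.card_bij (fun K _ => K \ S)
  · intro K hK
    simp only [Finset.mem_filter, Finset.mem_powerset] at hK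
    obtain ⟨-, -, hSK, hKr⟩ := hK
    rw [Finset.mem_powersetCard]
    refine ⟨fun x hx => ?_, ?_⟩
    · rw [Finset.mem_sdiff] at hx
      exact Finset.mem_compl.2 hx.2
    · rw [Finset.card_sdiff_of_subset hSK, hKr]
  · intro K hK K' hK' h
    simp only [Finset.mem_filter, Finset.mem_powerset] at hK hK'
    have : K \ S ∪ S = K' \ S ∪ S := by rw [h]
    rwa [Finset.sdiff_union_of_subset hK.2.2.1,
      Finset.sdiff_union_of_subset hK'.2.2.1] at this
  · intro T hT
    rw [Finset.mem_powersetCard] at hT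
    obtain ⟨hTc, hTcard⟩ := hT
    have hdisj : Disjoint T S := by
      rw [Finset.disjoint_left]
      intro a ha hS
      exact (Finset.mem_compl.1 (hTc ha)) hS
    refine ⟨T ∪ S, ?_, ?_⟩
    · simp only [Finset.mem_filter, Finset.mem_powerset]
      have hcard : (T ∪ S).card = r := by
        rw [Finset.card_union_of_disjoint hdisj, hTcard,
          Nat.sub_add_cancel hr]
      exact ⟨Finset.subset_univ _, Or.inr trivial, Finset.subset_union_right, hcard⟩
    · rw [Finset.union_sdiff_right, Finset.sdiff_eq_self_of_disjoint hdisj]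

/-- Frequency-counting formula for the truncated anchored-ANOVA expansion:
the level-`ℓ` truncated sum of ANOVA terms equals a weighted sum of the
anchored evaluations `P_S u`, with integer weights `ϰ_{M,|S|,ℓ}`. -/
theorem anchored_anova_truncated_frequency_counting
    {M : ℕ} {Γ : Fin M → Type*} [∀ m, Nonempty (Γ m)]
    {V : Type*} [AddCommGroup V]
    (u : (∀ m, Γ m) → V) (c : ∀ m, Γ m)
    (ℓ : ℕ) (hℓ : ℓ ≤ M) (ξ : ∀ m, Γ m) :
    ∑ K ∈ (Finset.univ : Finset (Fin M)).powerset.filter (fun K => K.card ≤ ℓ),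
      (∑ S ∈ K.powerset,
        ((-1 : ℤ) ^ (K.card - S.card)) •
          u (fun m => if m ∈ S then ξ m else c m))
    = ∑ S ∈ (Finset.univ : Finset (Fin M)).powerset.filter (fun S => S.card ≤ ℓ),
        (∑ r ∈ Finset.Icc S.card ℓ,
            (-1 : ℤ) ^ (r - S.card) * (M - S.card).choose (r - S.card)) •
          u (fun m => if m ∈ S then ξ m else c m) := by
  classical
  rw [Finset.sum_comm'
      (t' := (Finset.univ : Finset (Fin M)).powerset.filter (fun S => S.card ≤ ℓ))
      (s' := fun S => (Finset.univ : Finset (Fin M)).powerset.filter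
        (fun K => K.card ≤ ℓ ∧ S ⊆ K))
      (fun K S => by
        simp only [Finset.mem_filter, Finset.mem_powerset, Finset.mem_powerset]
        constructor
        · rintro ⟨⟨hK, hKl⟩, hSK⟩
          exact ⟨⟨hK, hKl, hSK⟩, Finset.subset_univ _,
            le_trans (Finset.card_le_card hSK) hKl⟩
        · rintro ⟨⟨hK, hKl, hSK⟩, _, _⟩
          exact ⟨⟨hK, hKl⟩, hSK⟩)]
  refine Finset.sum_congr rfl fun S hS => ?_
  rw [← Finset.sum_smul]
  congr 1
  rw [← Finset.sum_fiberwise_of_maps_to (g := Finset.card)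
      (t := Finset.Icc S.card ℓ)
      (fun K hK => by
        simp only [Finset.mem_filter, Finset.mem_powerset] at hK
        exact Finset.mem_Icc.2 ⟨Finset.card_le_card hK.2.2, hK.2.1⟩)]
  refine Finset.sum_congr rfl fun r hr => ?_
  rw [Finset.mem_Icc] at hr
  rw [Finset.filter_filter]
  have : ∀ K ∈ (Finset.univ : Finset (Fin M)).powerset.filter
      (fun K => (K.card ≤ ℓ ∧ S ⊆ K) ∧ K.card = r), (-1 : ℤ) ^ (K.card - S.card)
      = (-1 : ℤ) ^ (r - S.card) := by
    intro K hK
    simp only [Finset.mem_filter] at hK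
    rw [hK.2.2]
  rw [Finset.sum_congr rfl this, Finset.sum_const, nsmul_eq_mul, mul_comm]
  congr 1
  rw [show ((Finset.univ : Finset (Fin M)).powerset.filter
      (fun K => (K.card ≤ ℓ ∧ S ⊆ K) ∧ K.card = r))
    = ((Finset.univ : Finset (Fin M)).powerset.filter
      (fun K => (K.card ≤ r ∨ True) ∧ S ⊆ K ∧ K.card = r)) from by
    apply Finset.filter_congr
    intro K _
    constructor
    · rintro ⟨⟨h1, h2⟩, h3⟩; exact ⟨Or.inr trivial, h2, h3⟩
    · rintro ⟨_, h2, h3⟩; exact ⟨⟨h3 ▸ hr.2, h2⟩, h3⟩]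
  exact_mod_cast count_supersets_aux S r hr.1
end

section
/- Annihilation property of abstract ANOVA terms for a compatible family of projections: let R be a commutative ring and let (P_S)_{S ⊆ {1,…,M}} be a family of R-linear endomorphisms of an R-module V satisfying P_S ∘ P_T = P_{S∩T} for all S, T ⊆ {1,…,M}. For u ∈ V and K ⊆ {1,…,M}, define the ANOVA term u_K = Σ_{S ⊆ K} (−1)^{|K|−|S|} P_S u. Then for every J ⊆ {1,…,M} with K ⊄ J (i.e., there exists m ∈ K with m ∉ J), one has P_J u_K = 0. -/
/-- Annihilation property of abstract ANOVA terms for a compatible family of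
projections: if `P S ∘ P T = P (S ∩ T)` and `K ⊄ J`, then `P J u_K = 0`. -/
theorem abstract_anova_term_annihilation
    {M : ℕ} {R : Type*} [CommRing R] {V : Type*} [AddCommGroup V] [Module R V]
    (P : Finset (Fin M) → V →ₗ[R] V)
    (hP : ∀ S T : Finset (Fin M), (P S).comp (P T) = P (S ∩ T))
    (u : V) (K J : Finset (Fin M)) (hKJ : ∃ m ∈ K, m ∉ J) :
    P J (∑ S ∈ K.powerset, ((-1 : ℤ) ^ (K.card - S.card)) • P S u) = 0 := by
  obtain ⟨m, hmK, hmJ⟩ := hKJ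
  have hKm : K = insert m (K.erase m) := (Finset.insert_erase hmK).symm
  have hmE : m ∉ K.erase m := Finset.notMem_erase m K
  rw [map_sum]
  have hterm : ∀ S : Finset (Fin M), P J (((-1 : ℤ) ^ (K.card - S.card)) • P S u)
      = ((-1 : ℤ) ^ (K.card - S.card)) • P (J ∩ S) u := by
    intro S
    rw [map_zsmul]
    congr 1
    exact LinearMap.congr_fun (hP J S) u
  simp only [hterm]
  rw [hKm, Finset.sum_powerset_insert hmE]
  rw [← Finset.sum_add_distrib]
  apply Finset.sum_eq_zero
  intro A hA
  have hAK : A ⊆ K.erase m := Finset.mem_powerset.mp hA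
  have hmA : m ∉ A := fun h => hmE (hAK h)
  have hcard : (insert m (K.erase m)).card = (K.erase m).card + 1 := Finset.card_insert_of_notMem hmE
  have hcardA : (insert m A).card = A.card + 1 := Finset.card_insert_of_notMem hmA
  have hAle : A.card ≤ (K.erase m).card := Finset.card_le_card hAK
  have hJint : J ∩ insert m A = J ∩ A := by
    ext x
    simp only [Finset.mem_inter, Finset.mem_insert]
    constructor
    · rintro ⟨hxJ, hx | hx⟩
      · exact absurd (hx ▸ hxJ) hmJ
      · exact ⟨hxJ, hx⟩
    · rintro ⟨hxJ, hx⟩; exact ⟨hxJ, Or.inr hx⟩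
  rw [hJint, hcard, hcardA]
  have hsign : ((-1 : ℤ) ^ ((K.erase m).card + 1 - A.card))
      = -((-1 : ℤ) ^ ((K.erase m).card + 1 - (A.card + 1))) := by
    have : (K.erase m).card + 1 - A.card = ((K.erase m).card - A.card) + 1 := by omega
    rw [this]
    have : (K.erase m).card + 1 - (A.card + 1) = (K.erase m).card - A.card := by omega
    rw [this, pow_succ]
    ring
  rw [hsign, neg_smul, neg_add_cancel]
end

section
/- Anchored-ANOVA terms vanish in directions on which the function does not depend: suppose m ∈ K ⊆ {1,…,M} and u is independent of the m-th coordinate, i.e., u(ξ) = u(ξ′) whenever ξ_j = ξ′_j for all j ≠ m. Then u_K(ξ) = 0 for every ξ ∈ Γ, where u_K(ξ) = Σ_{S ⊆ K} (−1)^{|K|−|S|} (P_S u)(ξ). -/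
/-- Anchored-ANOVA terms vanish in directions on which the function does not
depend. -/
theorem anchored_anova_term_eq_zero_of_indep
    {M : ℕ} {Γ : Fin M → Type*} [∀ m, Nonempty (Γ m)]
    {V : Type*} [AddCommGroup V]
    (u : (∀ m, Γ m) → V) (c : ∀ m, Γ m)
    (K : Finset (Fin M)) (m : Fin M) (hm : m ∈ K)
    (hu : ∀ ξ ξ' : ∀ m, Γ m, (∀ j, j ≠ m → ξ j = ξ' j) → u ξ = u ξ')
    (ξ : ∀ m, Γ m) :
    ∑ S ∈ K.powerset,
      ((-1 : ℤ) ^ (K.card - S.card)) •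
        u (fun m => if m ∈ S then ξ m else c m) = 0 := by
  have hK : K = insert m (K.erase m) := (Finset.insert_erase hm).symm
  rw [hK, Finset.sum_powerset_insert (Finset.notMem_erase m K)]
  rw [← Finset.sum_add_distrib]
  apply Finset.sum_eq_zero
  intro t ht
  rw [Finset.mem_powerset] at ht
  have hmt : m ∉ t := fun h => Finset.notMem_erase m K (ht h)
  have hcard : t.card < (insert m (K.erase m)).card := by
    rw [Finset.card_insert_of_notMem (Finset.notMem_erase m K)]
    exact Nat.lt_succ_of_le (Finset.card_le_card ht)
  have hval : u (fun j => if j ∈ t then ξ j else c j)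
      = u (fun j => if j ∈ insert m t then ξ j else c j) := by
    apply hu
    intro j hj
    simp only [Finset.mem_insert]
    rcases eq_or_ne j m with rfl | h
    · exact absurd rfl hj
    · simp [h]
  rw [hval, Finset.card_insert_of_notMem hmt]
  have hexp : (insert m (K.erase m)).card - t.card
      = ((insert m (K.erase m)).card - (t.card + 1)) + 1 := by omega
  rw [hexp, pow_succ]
  simp [add_smul, neg_smul]
end

section
/- Exactness of the level-ℓ truncated anchored-ANOVA expansion for functions of effective dimension at most ℓ: suppose u = Σ_{i=1}^{n} v_i, where each v_i : Γ → V depends only on the coordinates in a set J_i ⊆ {1,…,M} with |J_i| ≤ ℓ (i.e., v_i(ξ) = v_i(ξ′) whenever ξ_m = ξ′_m for all m ∈ J_i). Then for every ξ ∈ Γ, Σ_{K ⊆ {1,…,M}, |K| ≤ ℓ} u_K(ξ) = u(ξ), where u_K(ξ) = Σ_{S ⊆ K} (−1)^{|K|−|S|} (P_S u)(ξ). -/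
/-! Writing `u_K(ξ) = ∑_{S ⊆ K} (-1)^{|K|-|S|} f(S)` with `f(S) = u(P_S ξ)` exhibits `u_K` as the
Möbius transform of `f` on the Boolean lattice, so `∑_{K ⊆ T} u_K = f(T)` by Möbius inversion.
If `f(S)` only depends on `S ∩ J`, splitting `K = insert a K'` with `a ∉ J` pairs the terms of
`u_K` off with opposite signs, so `u_K = 0` unless `K ⊆ J`. For `|J| ≤ ℓ` the truncated sum
therefore contains every nonzero term and equals `f(J) = u(ξ)`; the general case follows by
linearity in `u`. -/

open Finset

section Mobius

variable {α V : Type*} [DecidableEq α] [AddCommGroup V]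

/-- `u_K(ξ)` is `mobiusTransform (fun S => u (S.piecewise ξ c)) K`. -/
def mobiusTransform (f : Finset α → V) (K : Finset α) : V :=
  ∑ S ∈ K.powerset, (-1 : ℤ) ^ (K.card - S.card) • f S

theorem mobiusTransform_insert {a : α} {K : Finset α} (ha : a ∉ K) (f : Finset α → V) :
    mobiusTransform f (insert a K) =
      mobiusTransform (fun S => f (insert a S)) K - mobiusTransform f K := by
  have hsign : ∀ S ∈ K.powerset,
      (-1 : ℤ) ^ ((insert a K).card - S.card) = -(-1) ^ (K.card - S.card) := by
    intro S hS
    rw [card_insert_of_notMem ha, Nat.succ_sub (card_le_card (mem_powerset.1 hS)), pow_succ,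
      mul_neg_one]
  have hsign' : ∀ S ∈ K.powerset,
      (-1 : ℤ) ^ ((insert a K).card - (insert a S).card) = (-1) ^ (K.card - S.card) := by
    intro S hS
    have haS : a ∉ S := fun h => ha (mem_powerset.1 hS h)
    rw [card_insert_of_notMem ha, card_insert_of_notMem haS, Nat.add_sub_add_right]
  simp only [mobiusTransform, sum_powerset_insert ha]
  rw [sub_eq_neg_add, ← sum_neg_distrib]
  congr 1
  · exact sum_congr rfl fun S hS => by rw [hsign S hS, neg_smul]
  · exact sum_congr rfl fun S hS => by rw [hsign' S hS]

omit [DecidableEq α] in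
theorem mobiusTransform_finset_sum {ι : Type*} (s : Finset ι) (f : ι → Finset α → V)
    (K : Finset α) :
    mobiusTransform (fun S => ∑ i ∈ s, f i S) K = ∑ i ∈ s, mobiusTransform (f i) K := by
  simp only [mobiusTransform, smul_sum]
  exact sum_comm

theorem sum_powerset_mobiusTransform (f : Finset α → V) (T : Finset α) :
    ∑ K ∈ T.powerset, mobiusTransform f K = f T := by
  induction T using Finset.induction_on generalizing f with
  | empty => simp [mobiusTransform]
  | insert a T ha ih =>
    rw [sum_powerset_insert ha, ← ih (fun S => f (insert a S)), ← sum_add_distrib]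
    refine sum_congr rfl fun K hK => ?_
    rw [mobiusTransform_insert (fun h => ha (mem_powerset.1 hK h)), add_sub_cancel]

theorem mobiusTransform_eq_zero_of_not_subset {J K : Finset α} {f : Finset α → V}
    (hf : ∀ a ∉ J, ∀ S, f (insert a S) = f S) (hKJ : ¬K ⊆ J) : mobiusTransform f K = 0 := by
  obtain ⟨a, haK, haJ⟩ := not_subset.1 hKJ
  rw [← insert_erase haK, mobiusTransform_insert (notMem_erase a K)]
  simp only [hf a haJ, sub_self]

theorem sum_mobiusTransform_of_powerset_subset {J : Finset α} {𝒦 : Finset (Finset α)}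
    {f : Finset α → V} (hf : ∀ a ∉ J, ∀ S, f (insert a S) = f S) (hJ : J.powerset ⊆ 𝒦) :
    ∑ K ∈ 𝒦, mobiusTransform f K = f J := by
  rw [← sum_subset hJ fun K _ hK =>
    mobiusTransform_eq_zero_of_not_subset hf fun h => hK (mem_powerset.2 h)]
  exact sum_powerset_mobiusTransform f J

end Mobius

theorem apply_piecewise_insert_of_notMem {ι : Type*} [DecidableEq ι] {Γ : ι → Type*} {W : Type*}
    {J : Finset ι} {w : (∀ i, Γ i) → W} (hw : ∀ ξ ξ', (∀ i ∈ J, ξ i = ξ' i) → w ξ = w ξ')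
    {a : ι} (ha : a ∉ J) (S : Finset ι) (ξ c : ∀ i, Γ i) :
    w ((insert a S).piecewise ξ c) = w (S.piecewise ξ c) :=
  hw _ _ fun i hi => piecewise_insert_of_ne _ _ _ fun (h : i = a) => ha (h ▸ hi)

theorem anchored_anova_truncation_exact_of_effective_dim_le_general
    {M ℓ : ℕ} {Γ : Fin M → Type*}
    {V : Type*} [AddCommGroup V]
    (u : (∀ m, Γ m) → V) (c : ∀ m, Γ m)
    {n : ℕ} (v : Fin n → (∀ m, Γ m) → V) (J : Fin n → Finset (Fin M))
    (hJ : ∀ i, (J i).card ≤ ℓ)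
    (hv : ∀ i (ξ ξ' : ∀ m, Γ m), (∀ m ∈ J i, ξ m = ξ' m) → v i ξ = v i ξ')
    (hu : ∀ ξ, u ξ = ∑ i, v i ξ) (ξ : ∀ m, Γ m) :
    ∑ K ∈ (Finset.univ : Finset (Fin M)).powerset.filter (fun K => K.card ≤ ℓ),
      (∑ S ∈ K.powerset,
        ((-1 : ℤ) ^ (K.card - S.card)) •
          u (fun m => if m ∈ S then ξ m else c m)) = u ξ := by
  change ∑ K ∈ _, mobiusTransform (fun S => u (S.piecewise ξ c)) K = u ξ
  simp only [hu, mobiusTransform_finset_sum]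
  rw [sum_comm]
  refine sum_congr rfl fun i _ => ?_
  have hJ_powerset : (J i).powerset ⊆ univ.powerset.filter (fun K => K.card ≤ ℓ) := fun K hK =>
    mem_filter.2 ⟨mem_powerset.2 (subset_univ K), (card_le_card (mem_powerset.1 hK)).trans (hJ i)⟩
  rw [sum_mobiusTransform_of_powerset_subset
    (fun a ha S => apply_piecewise_insert_of_notMem (hv i) ha S ξ c) hJ_powerset]
  exact hv i _ _ fun m hm => piecewise_eq_of_mem _ _ _ hm

/-- Exactness of the level-`ℓ` truncated anchored-ANOVA expansion for
functions of effective dimension at most `ℓ`. -/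
theorem anchored_anova_truncation_exact_of_effective_dim_le
    {M ℓ : ℕ} (hℓ : ℓ ≤ M) {Γ : Fin M → Type*} [∀ m, Nonempty (Γ m)]
    {V : Type*} [AddCommGroup V]
    (u : (∀ m, Γ m) → V) (c : ∀ m, Γ m)
    {n : ℕ} (v : Fin n → (∀ m, Γ m) → V) (J : Fin n → Finset (Fin M))
    (hJ : ∀ i, (J i).card ≤ ℓ)
    (hv : ∀ i (ξ ξ' : ∀ m, Γ m), (∀ m ∈ J i, ξ m = ξ' m) → v i ξ = v i ξ')
    (hu : ∀ ξ, u ξ = ∑ i, v i ξ) (ξ : ∀ m, Γ m) :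
    ∑ K ∈ (Finset.univ : Finset (Fin M)).powerset.filter (fun K => K.card ≤ ℓ),
      (∑ S ∈ K.powerset,
        ((-1 : ℤ) ^ (K.card - S.card)) •
          u (fun m => if m ∈ S then ξ m else c m)) = u ξ :=
  anchored_anova_truncation_exact_of_effective_dim_le_general u c v J hJ hv hu ξ
end
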